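/- If the null p-values are independent of each other and of the non-null p-values, each null p-value is super-uniform (P(P_j ≤ u) ≤ u for all u ∈ [0,1]), the level sequence {α_t} is monotone, and FDP*(t) ≤ α almost surely for all t ∈ ℕ, then FDR(t) ≤ α for all t ∈ ℕ. (Proposition 1(d)) -/

import Mathlib

/-!
Fix a null `i` and hallucinate `P_i = 0`, keeping every other p-value. The level rule is
predictable, so `α_i` does not change, and the hallucinated run rejects `i`; since the levels
are monotone in past rejections, this run rejects at least as often as the real one, with equal
rejection sets whenever the real run rejects `i`. Hence, with `R̃` the hallucinated count,
`E[1{P_i ≤ α_i} / R] = E[1{P_i ≤ α_i} / R̃] ≤ E[α_i / R̃] ≤ E[α_i / R]`: the middle step holds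
because `α_i` and `R̃` are functions of the other p-values, hence independent of the
super-uniform `P_i`. Summing over the nulls gives `FDR(t) ≤ E[FDP*(t)] ≤ α`.
-/

open MeasureTheory ProbabilityTheory

/-- The rejection indicator history available just before testing hypothesis `t`:
the indicators `R_j = 1{P_j ≤ α_j}` for `j < t`, encoded as a boolean sequence. -/
noncomputable def rejHistory {Ω : Type*} (P alpha : ℕ → Ω → ℝ) (t : ℕ) (ω : Ω) : ℕ → Bool :=
  fun j => decide (j < t ∧ P j ω ≤ alpha j ω)

/-- The number of rejections `|R(t)|` among the hypotheses indexed `j ≤ t`. -/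
noncomputable def numRejections {Ω : Type*} (P alpha : ℕ → Ω → ℝ) (t : ℕ) (ω : Ω) : ℝ :=
  ∑ j ∈ Finset.Iic t, if P j ω ≤ alpha j ω then (1 : ℝ) else 0

open Classical in
/-- The number of false rejections `|H⁰ ∩ R(t)|` among the hypotheses indexed `j ≤ t`. -/
noncomputable def numFalseRejections {Ω : Type*} (H0 : Set ℕ) (P alpha : ℕ → Ω → ℝ)
    (t : ℕ) (ω : Ω) : ℝ :=
  ∑ j ∈ Finset.Iic t, if j ∈ H0 ∧ P j ω ≤ alpha j ω then (1 : ℝ) else 0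

/-- The false discovery proportion `FDP(t) = |H⁰ ∩ R(t)| / max(|R(t)|, 1)`. -/
noncomputable def FDP {Ω : Type*} (H0 : Set ℕ) (P alpha : ℕ → Ω → ℝ) (t : ℕ) (ω : Ω) : ℝ :=
  numFalseRejections H0 P alpha t ω / max (numRejections P alpha t ω) 1

open Classical in
/-- The oracle FDP estimate `FDP*(t) = (Σ_{j ≤ t, j ∈ H⁰} α_j) / max(|R(t)|, 1)`. -/
noncomputable def FDPstar {Ω : Type*} (H0 : Set ℕ) (P alpha : ℕ → Ω → ℝ)
    (t : ℕ) (ω : Ω) : ℝ :=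
  (∑ j ∈ Finset.Iic t, if j ∈ H0 then alpha j ω else 0) / max (numRejections P alpha t ω) 1

/-- The null p-values `{P_j : j ∈ H⁰}` are independent of each other and of
the non-null p-values: the family of σ-algebras consisting of `σ(P_j)` for each null `j`,
together with the σ-algebra generated by all non-null p-values, is independent. -/
def nullsIndep {Ω : Type*} [MeasurableSpace Ω] (μ : Measure Ω) (H0 : Set ℕ)
    (P : ℕ → Ω → ℝ) : Prop :=
  ProbabilityTheory.iIndep
    (fun i : Option {j : ℕ // j ∈ H0} =>
      i.elim (⨆ j ∈ H0ᶜ, MeasurableSpace.comap (P j) inferInstance)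
        (fun j => MeasurableSpace.comap (P j.1) inferInstance)) μ


section SuperUniform

variable {Ω : Type*} [MeasurableSpace Ω] {μ : Measure Ω}

def SuperUniform (X : Ω → ℝ) (μ : Measure Ω) : Prop :=
  ∀ u ∈ Set.Icc (0 : ℝ) 1, μ {ω | X ω ≤ u} ≤ ENNReal.ofReal u

theorem SuperUniform.measureReal_map_Iic_le {X : Ω → ℝ} (hsu : SuperUniform X μ)
    (hX : Measurable X) {u : ℝ} (hu : u ∈ Set.Icc (0 : ℝ) 1) :
    (μ.map X).real (Set.Iic u) ≤ u := by
  rw [measureReal_def, Measure.map_apply hX measurableSet_Iic]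
  exact ENNReal.toReal_le_of_le_ofReal hu.1 (hsu u hu)

/-- Fubini against the product law of `X` and `(U, W)`: the inner integral over `X` is
`P(X ≤ U) ≤ U`. -/
theorem SuperUniform.integral_ite_le_le_integral_mul [IsFiniteMeasure μ] {X U W : Ω → ℝ}
    (hsu : SuperUniform X μ) (hX : Measurable X) (hU : Measurable U) (hW : Measurable W)
    (hindep : IndepFun X (fun ω => (U ω, W ω)) μ)
    (hU01 : ∀ ω, U ω ∈ Set.Icc (0 : ℝ) 1) (hW0 : ∀ ω, 0 ≤ W ω) (hWint : Integrable W μ) :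
    ∫ ω, (if X ω ≤ U ω then W ω else 0) ∂μ ≤ ∫ ω, U ω * W ω ∂μ := by
  set Y : Ω → ℝ × ℝ := fun ω => (U ω, W ω)
  have hY : Measurable Y := hU.prodMk hW
  have hY_mem : ∀ᵐ y ∂μ.map Y, y.1 ∈ Set.Icc (0 : ℝ) 1 ∧ 0 ≤ y.2 :=
    (ae_map_iff hY.aemeasurable ((measurableSet_Icc.preimage measurable_fst).inter
      (measurableSet_le measurable_const measurable_snd))).2 (ae_of_all _ fun ω => ⟨hU01 ω, hW0 ω⟩)
  have hWint' : Integrable (fun y : ℝ × ℝ => y.2) (μ.map Y) :=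
    (integrable_map_measure measurable_snd.aestronglyMeasurable hY.aemeasurable).2 hWint
  set φ : ℝ × ℝ × ℝ → ℝ := fun p => if p.1 ≤ p.2.1 then p.2.2 else 0
  have hφ : Measurable φ :=
    Measurable.ite (measurableSet_le measurable_fst measurable_snd.fst) measurable_snd.snd
      measurable_const
  have hφint : Integrable φ ((μ.map X).prod (μ.map Y)) :=
    (hWint'.norm.comp_snd (μ.map X)).mono' hφ.aestronglyMeasurable
      (ae_of_all _ fun p => by dsimp only [φ]; split_ifs <;> simp)
  have hinner : ∀ y : ℝ × ℝ, ∫ x, φ (x, y) ∂μ.map X = (μ.map X).real (Set.Iic y.1) * y.2 :=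
    fun y => by
      rw [← smul_eq_mul, ← integral_indicator_const y.2 measurableSet_Iic]
      exact integral_congr_ae (ae_of_all _ fun x => by simp [φ, Set.indicator])
  calc ∫ ω, (if X ω ≤ U ω then W ω else 0) ∂μ = ∫ p, φ p ∂μ.map (fun ω => (X ω, Y ω)) :=
        (integral_map (hX.prodMk hY).aemeasurable hφ.aestronglyMeasurable).symm
    _ = ∫ y, (μ.map X).real (Set.Iic y.1) * y.2 ∂μ.map Y := by
        rw [hindep.map_prod_eq_prod_map_map hX.aemeasurable hY.aemeasurable,
          integral_prod_symm _ hφint]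
        simp only [hinner]
    _ ≤ ∫ y, y.1 * y.2 ∂μ.map Y := by
        refine integral_mono_of_nonneg (hY_mem.mono fun y hy => mul_nonneg measureReal_nonneg hy.2)
          ?_ ?_
        · refine hWint'.mono' (measurable_fst.mul measurable_snd).aestronglyMeasurable ?_
          filter_upwards [hY_mem] with y ⟨⟨h0, h1⟩, h2⟩
          rw [Real.norm_eq_abs, abs_of_nonneg (by positivity)]
          nlinarith
        · filter_upwards [hY_mem] with y ⟨hy1, hy2⟩
          exact mul_le_mul_of_nonneg_right (hsu.measureReal_map_Iic_le hX hy1) hy2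
    _ = ∫ ω, U ω * W ω ∂μ :=
        integral_map hY.aemeasurable (measurable_fst.mul measurable_snd).aestronglyMeasurable

end SuperUniform

def rejCount (r : ℕ → Bool) (t : ℕ) : ℝ :=
  ∑ k ∈ Finset.Iic t, if r k then 1 else 0

theorem rejCount_mono (t : ℕ) : Monotone fun r => rejCount r t := fun r r' h =>
  Finset.sum_le_sum fun k _ => by
    have hk := h k
    revert hk
    cases r k <;> cases r' k <;> simp

section OnlineProcedure

variable (f : ℕ → (ℕ → Bool) → ℝ)

/-- The rejections of the online procedure with level rule `f`, as a function of the p-value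
sequence alone, so that it can be rerun on modified p-values. -/
noncomputable def onlineRej (p : ℕ → ℝ) (i : ℕ) : Bool :=
  decide (p i ≤ f i (fun k => if _ : k < i then onlineRej p k else false))

noncomputable def onlineHist (p : ℕ → ℝ) (i : ℕ) : ℕ → Bool :=
  fun k => if k < i then onlineRej f p k else false

variable {f}

theorem onlineRej_eq (p : ℕ → ℝ) (i : ℕ) :
    onlineRej f p i = decide (p i ≤ f i (onlineHist f p i)) := by
  rw [onlineRej]
  simp only [dite_eq_ite]
  rfl

theorem onlineHist_congr {p p' : ℕ → ℝ} {i : ℕ}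
    (h : ∀ k < i, onlineRej f p k = onlineRej f p' k) : onlineHist f p i = onlineHist f p' i := by
  funext k
  simp only [onlineHist]
  split_ifs with hk
  exacts [h k hk, rfl]

theorem onlineRej_eq_of_forall_le {p p' : ℕ → ℝ} (i : ℕ)
    (h : ∀ k ≤ i, p k = p' k ∨ onlineRej f p k = onlineRej f p' k) :
    onlineRej f p i = onlineRej f p' i := by
  induction i using Nat.strong_induction_on with
  | _ i ih =>
    rcases h i le_rfl with hp | hrej
    · rw [onlineRej_eq, onlineRej_eq, hp,
        onlineHist_congr fun k hk => ih k hk fun m hm => h m (hm.trans hk.le)]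
    · exact hrej

theorem onlineHist_eq_of_forall_lt {p p' : ℕ → ℝ} {i : ℕ} (h : ∀ k < i, p k = p' k) :
    onlineHist f p i = onlineHist f p' i :=
  onlineHist_congr fun k hk =>
    onlineRej_eq_of_forall_le k fun m hm => Or.inl (h m (hm.trans_lt hk))

theorem onlineRej_antitone (hmono : ∀ n, Monotone (f n)) : Antitone (onlineRej f) := by
  intro p' p hp i
  induction i using Nat.strong_induction_on with
  | _ i ih =>
    have hhist : onlineHist f p i ≤ onlineHist f p' i := fun k => by
      simp only [onlineHist]
      split_ifs with hk
      exacts [ih k hk, le_rfl]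
    rw [onlineRej_eq, onlineRej_eq]
    by_cases hrej : p i ≤ f i (onlineHist f p i)
    · simp [hrej, (hp i).trans (hrej.trans (hmono i hhist))]
    · simp [hrej]

theorem onlineHist_update_self (p : ℕ → ℝ) (i : ℕ) (c : ℝ) :
    onlineHist f (Function.update p i c) i = onlineHist f p i :=
  onlineHist_eq_of_forall_lt fun _ hk => Function.update_of_ne hk.ne _ _

theorem onlineRej_update_zero_self {p : ℕ → ℝ} {i : ℕ} (hlevel : 0 ≤ f i (onlineHist f p i)) :
    onlineRej f (Function.update p i 0) i = true := by
  simpa [onlineRej_eq, onlineHist_update_self] using hlevel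

theorem onlineRej_update_zero_eq {p : ℕ → ℝ} {i : ℕ} (hlevel : 0 ≤ f i (onlineHist f p i))
    (hrej : onlineRej f p i = true) : onlineRej f (Function.update p i 0) = onlineRej f p := by
  funext k
  refine onlineRej_eq_of_forall_le k fun m _ => ?_
  by_cases hm : m = i
  · subst hm
    exact Or.inr ((onlineRej_update_zero_self hlevel).trans hrej.symm)
  · exact Or.inl (Function.update_of_ne hm _ _)

theorem onlineRej_le_update_zero (hmono : ∀ n, Monotone (f n)) {p : ℕ → ℝ} {i : ℕ}
    (hlevel : 0 ≤ f i (onlineHist f p i)) :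
    onlineRej f p ≤ onlineRej f (Function.update p i 0) := by
  by_cases hrej : onlineRej f p i = true
  · exact (onlineRej_update_zero_eq hlevel hrej).ge
  · refine onlineRej_antitone hmono fun m => ?_
    by_cases hm : m = i
    · subst hm
      rw [onlineRej_eq, decide_eq_true_iff, not_le] at hrej
      simpa using hlevel.trans hrej.le
    · exact (Function.update_of_ne hm _ _).le

section Measurability

variable {Ω β : Type*} {mΩ : MeasurableSpace Ω} [MeasurableSpace β]

theorem measurable_comp_truncate {b : ℕ → Ω → Bool} {n : ℕ} (hb : ∀ k < n, Measurable (b k))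
    (g : (ℕ → Bool) → β) : Measurable fun ω => g fun k => if k < n then b k ω else false := by
  have hfactor : (fun ω => g fun k => if k < n then b k ω else false) =
      (fun v : Fin n → Bool => g fun k => if hk : k < n then v ⟨k, hk⟩ else false) ∘
        fun ω k => b k ω := by
    funext ω
    simp only [Function.comp_apply, dite_eq_ite]
  rw [hfactor]
  exact (measurable_of_countable _).comp (measurable_pi_lambda _ fun k => hb k k.2)

theorem measurable_onlineRej {Q : Ω → ℕ → ℝ} (hQ : ∀ k, Measurable fun ω => Q ω k) (i : ℕ) :
    Measurable fun ω => onlineRej f (Q ω) i := by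
  induction i using Nat.strong_induction_on with
  | _ i ih =>
    refine measurable_to_bool ?_
    simp only [Set.preimage, Set.mem_singleton_iff, onlineRej_eq, decide_eq_true_iff]
    exact measurableSet_le (hQ i) (measurable_comp_truncate ih (f i))

theorem measurable_comp_onlineHist {Q : Ω → ℕ → ℝ} (hQ : ∀ k, Measurable fun ω => Q ω k)
    (g : (ℕ → Bool) → β) (i : ℕ) : Measurable fun ω => g (onlineHist f (Q ω) i) :=
  measurable_comp_truncate (fun k _ => measurable_onlineRej hQ k) g

end Measurability

section ActualRun

variable {Ω : Type*} {P alpha : ℕ → Ω → ℝ}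

theorem onlineRej_eq_decide (hpred : ∀ t ω, alpha t ω = f t (rejHistory P alpha t ω))
    (ω : Ω) (i : ℕ) : onlineRej f (P · ω) i = decide (P i ω ≤ alpha i ω) := by
  induction i using Nat.strong_induction_on with
  | _ i ih =>
    have hhist : onlineHist f (P · ω) i = rejHistory P alpha i ω := by
      funext k
      by_cases hk : k < i <;> simp [onlineHist, rejHistory, hk, ih]
    rw [onlineRej_eq, hhist, ← hpred]

theorem alpha_eq_onlineHist (hpred : ∀ t ω, alpha t ω = f t (rejHistory P alpha t ω))
    (ω : Ω) (i : ℕ) : alpha i ω = f i (onlineHist f (P · ω) i) := by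
  have hhist : onlineHist f (P · ω) i = rejHistory P alpha i ω := by
    funext k
    by_cases hk : k < i <;> simp [onlineHist, rejHistory, hk, onlineRej_eq_decide hpred]
  rw [hhist, hpred]

theorem alpha_eq_onlineHist_update (hpred : ∀ t ω, alpha t ω = f t (rejHistory P alpha t ω))
    (ω : Ω) (i : ℕ) (c : ℝ) : alpha i ω = f i (onlineHist f (Function.update (P · ω) i c) i) := by
  rw [onlineHist_update_self, alpha_eq_onlineHist hpred]

theorem numRejections_eq_rejCount (hpred : ∀ t ω, alpha t ω = f t (rejHistory P alpha t ω))
    (t : ℕ) (ω : Ω) : numRejections P alpha t ω = rejCount (onlineRej f (P · ω)) t := by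
  simp [numRejections, rejCount, onlineRej_eq_decide hpred]

theorem numRejections_le_rejCount_update (hpred : ∀ t ω, alpha t ω = f t (rejHistory P alpha t ω))
    (hmono : ∀ n, Monotone (f n)) {ω : Ω} {i : ℕ} (hlevel : 0 ≤ alpha i ω) (t : ℕ) :
    numRejections P alpha t ω ≤ rejCount (onlineRej f (Function.update (P · ω) i 0)) t := by
  rw [numRejections_eq_rejCount hpred]
  exact rejCount_mono t (onlineRej_le_update_zero hmono (alpha_eq_onlineHist hpred ω i ▸ hlevel))

theorem numRejections_eq_rejCount_update (hpred : ∀ t ω, alpha t ω = f t (rejHistory P alpha t ω))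
    {ω : Ω} {i : ℕ} (hlevel : 0 ≤ alpha i ω) (hrej : P i ω ≤ alpha i ω) (t : ℕ) :
    numRejections P alpha t ω = rejCount (onlineRej f (Function.update (P · ω) i 0)) t := by
  rw [numRejections_eq_rejCount hpred,
    onlineRej_update_zero_eq (alpha_eq_onlineHist hpred ω i ▸ hlevel)]
  simpa [onlineRej_eq_decide hpred] using hrej

end ActualRun

end OnlineProcedure

abbrev sigmaOthers {Ω : Type*} (P : ℕ → Ω → ℝ) (i : ℕ) : MeasurableSpace Ω :=
  ⨆ (k) (_ : k ≠ i), MeasurableSpace.comap (P k) inferInstance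

theorem sigmaOthers_le {Ω : Type*} [m0 : MeasurableSpace Ω] {P : ℕ → Ω → ℝ}
    (hP : ∀ j, Measurable (P j)) (i : ℕ) : sigmaOthers P i ≤ m0 :=
  iSup₂_le fun k _ => (hP k).comap_le

theorem measurable_sigmaOthers {Ω : Type*} {P : ℕ → Ω → ℝ} {i k : ℕ} (hk : k ≠ i) :
    Measurable[sigmaOthers P i] (P k) :=
  (comap_measurable (P k)).mono
    (le_iSup₂ (f := fun k (_ : k ≠ i) => MeasurableSpace.comap (P k) inferInstance) k hk) le_rfl

theorem nullsIndep.indep_comap_sigmaOthers {Ω : Type*} [m0 : MeasurableSpace Ω] {μ : Measure Ω}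
    {H0 : Set ℕ} {P : ℕ → Ω → ℝ} (h : nullsIndep μ H0 P) (hP : ∀ j, Measurable (P j))
    {i : ℕ} (hi : i ∈ H0) :
    Indep (MeasurableSpace.comap (P i) inferInstance) (sigmaOthers P i) μ := by
  set m : Option {j : ℕ // j ∈ H0} → MeasurableSpace Ω := fun o =>
    o.elim (⨆ j ∈ H0ᶜ, MeasurableSpace.comap (P j) inferInstance)
      (fun j => MeasurableSpace.comap (P j.1) inferInstance)
  have hm_le : ∀ o, m o ≤ m0 := by
    rintro (_ | j)
    exacts [iSup₂_le fun k _ => (hP k).comap_le, (hP j).comap_le]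
  have hdisj : Disjoint ({some ⟨i, hi⟩} : Set (Option {j // j ∈ H0})) {some ⟨i, hi⟩}ᶜ :=
    disjoint_compl_right
  refine indep_of_indep_of_le_right
    (indep_of_indep_of_le_left (indep_iSup_of_disjoint hm_le h hdisj)
      (le_biSup m (Set.mem_singleton (some (⟨i, hi⟩ : {j // j ∈ H0})))))
    (iSup₂_le fun k hk => ?_)
  by_cases hkH : k ∈ H0
  · exact le_biSup m (show some ⟨k, hkH⟩ ∈ ({some ⟨i, hi⟩} : Set _)ᶜ by simpa using hk)
  · exact (le_biSup (fun j => MeasurableSpace.comap (P j) inferInstance) hkH).trans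
      (le_biSup m (show none ∈ ({some ⟨i, hi⟩} : Set _)ᶜ by simp))

theorem div_max_one_mem_Icc {a x : ℝ} (ha : a ∈ Set.Icc (0 : ℝ) 1) :
    a / max x 1 ∈ Set.Icc (0 : ℝ) 1 :=
  have hpos : (0 : ℝ) ≤ max x 1 := zero_le_one.trans (le_max_right x 1)
  ⟨div_nonneg ha.1 hpos, div_le_one_of_le₀ (ha.2.trans (le_max_right x 1)) hpos⟩

theorem integrable_div_max_one {Ω : Type*} [MeasurableSpace Ω] {μ : Measure Ω} [IsFiniteMeasure μ]
    {g N : Ω → ℝ} (hg : Measurable g) (hN : Measurable N) (hg01 : ∀ ω, g ω ∈ Set.Icc (0 : ℝ) 1) :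
    Integrable (fun ω => g ω / max (N ω) 1) μ :=
  Integrable.of_mem_Icc 0 1 (hg.div (hN.max measurable_const)).aemeasurable
    (ae_of_all _ fun ω => div_max_one_mem_Icc (hg01 ω))

theorem measurable_numRejections {Ω : Type*} [MeasurableSpace Ω] {P alpha : ℕ → Ω → ℝ}
    (hP : ∀ j, Measurable (P j)) (ha : ∀ j, Measurable (alpha j)) (t : ℕ) :
    Measurable (numRejections P alpha t) :=
  Finset.measurable_sum _ fun k _ =>
    Measurable.ite (measurableSet_le (hP k) (ha k)) measurable_const measurable_const

open Classical in
theorem FDP_eq_sum {Ω : Type*} (H0 : Set ℕ) (P alpha : ℕ → Ω → ℝ) (t : ℕ) (ω : Ω) :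
    FDP H0 P alpha t ω = ∑ k ∈ (Finset.Iic t).filter (· ∈ H0),
      (if P k ω ≤ alpha k ω then 1 else 0) / max (numRejections P alpha t ω) 1 := by
  rw [FDP, numFalseRejections, Finset.sum_filter, Finset.sum_div]
  simp only [ite_and, ite_div, zero_div]

open Classical in
theorem FDPstar_eq_sum {Ω : Type*} (H0 : Set ℕ) (P alpha : ℕ → Ω → ℝ) (t : ℕ) (ω : Ω) :
    FDPstar H0 P alpha t ω = ∑ k ∈ (Finset.Iic t).filter (· ∈ H0),
      alpha k ω / max (numRejections P alpha t ω) 1 := by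
  rw [FDPstar, Finset.sum_filter, Finset.sum_div]
  simp only [ite_div, zero_div]

section FDR

variable {Ω : Type*} [MeasurableSpace Ω] {μ : Measure Ω} [IsProbabilityMeasure μ]
  {P alpha : ℕ → Ω → ℝ} {H0 : Set ℕ}

theorem integral_rej_div_le_integral_level_div {f : ℕ → (ℕ → Bool) → ℝ}
    (hPmeas : ∀ j, Measurable (P j)) (hameas : ∀ j, Measurable (alpha j))
    (hpred : ∀ t ω, alpha t ω = f t (rejHistory P alpha t ω)) (hmono : ∀ t, Monotone (f t))
    {i : ℕ} (ha : ∀ ω, alpha i ω ∈ Set.Icc (0 : ℝ) 1) (hsu : SuperUniform (P i) μ)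
    (hindep : Indep (MeasurableSpace.comap (P i) inferInstance) (sigmaOthers P i) μ) (t : ℕ) :
    ∫ ω, (if P i ω ≤ alpha i ω then 1 else 0) / max (numRejections P alpha t ω) 1 ∂μ ≤
      ∫ ω, alpha i ω / max (numRejections P alpha t ω) 1 ∂μ := by
  have hG := sigmaOthers_le hPmeas i
  set Q : Ω → ℕ → ℝ := fun ω => Function.update (P · ω) i 0
  have hQ : ∀ k, Measurable[sigmaOthers P i] fun ω => Q ω k := by
    intro k
    by_cases hk : k = i
    · subst hk
      simp only [Q, Function.update_self]
      exact measurable_const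
    · simpa only [Q, Function.update_of_ne hk] using measurable_sigmaOthers hk
  set W : Ω → ℝ := fun ω => 1 / max (rejCount (onlineRej f (Q ω)) t) 1
  -- `α_i` only sees `P_k` for `k < i`, which the update leaves alone.
  have halphaG : Measurable[sigmaOthers P i] (alpha i) := by
    rw [funext (alpha_eq_onlineHist_update hpred · i 0)]
    exact measurable_comp_onlineHist hQ (f i) i
  have hcountG : Measurable[sigmaOthers P i] fun ω => rejCount (onlineRej f (Q ω)) t :=
    Finset.measurable_sum _ fun k _ =>
      (measurable_of_countable fun b : Bool => if b then (1 : ℝ) else 0).comp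
        (measurable_onlineRej hQ k)
  have hWG : Measurable[sigmaOthers P i] W := measurable_const.div (hcountG.max measurable_const)
  have hpair : IndepFun (P i) (fun ω => (alpha i ω, W ω)) μ :=
    (IndepFun_iff_Indep _ _ _).2
      (indep_of_indep_of_le_right hindep (halphaG.prodMk hWG).comap_le)
  have hR := measurable_numRejections hPmeas hameas t
  calc ∫ ω, (if P i ω ≤ alpha i ω then 1 else 0) / max (numRejections P alpha t ω) 1 ∂μ
      = ∫ ω, (if P i ω ≤ alpha i ω then W ω else 0) ∂μ := by
        refine integral_congr_ae (ae_of_all _ fun ω => ?_)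
        by_cases hrej : P i ω ≤ alpha i ω
        · simp [hrej, W, Q, numRejections_eq_rejCount_update hpred (ha ω).1 hrej]
        · simp [hrej]
    _ ≤ ∫ ω, alpha i ω * W ω ∂μ :=
        hsu.integral_ite_le_le_integral_mul (hPmeas i) (halphaG.mono hG le_rfl)
          (hWG.mono hG le_rfl) hpair ha (fun ω => by positivity)
          (integrable_div_max_one measurable_const (hcountG.mono hG le_rfl)
            fun _ => ⟨zero_le_one, le_rfl⟩)
    _ ≤ ∫ ω, alpha i ω / max (numRejections P alpha t ω) 1 ∂μ := by
        simp only [W, mul_one_div]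
        refine integral_mono (integrable_div_max_one (hameas i) (hcountG.mono hG le_rfl) ha)
          (integrable_div_max_one (hameas i) hR ha) fun ω => ?_
        exact div_le_div_of_nonneg_left (ha ω).1 (lt_max_of_lt_right one_pos)
          (max_le_max (numRejections_le_rejCount_update hpred hmono (ha ω).1 t) le_rfl)

theorem integrable_FDPstar (hPmeas : ∀ j, Measurable (P j)) (hameas : ∀ j, Measurable (alpha j))
    (ha : ∀ j ω, alpha j ω ∈ Set.Icc (0 : ℝ) 1) (t : ℕ) :
    Integrable (FDPstar H0 P alpha t) μ := by
  classical
  exact (integrable_finsetSum _ fun k _ =>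
    integrable_div_max_one (hameas k) (measurable_numRejections hPmeas hameas t) (ha k)).congr
      (ae_of_all _ fun ω => (FDPstar_eq_sum H0 P alpha t ω).symm)

theorem integral_FDP_le_integral_FDPstar {f : ℕ → (ℕ → Bool) → ℝ}
    (hPmeas : ∀ j, Measurable (P j)) (hameas : ∀ j, Measurable (alpha j))
    (ha : ∀ j ω, alpha j ω ∈ Set.Icc (0 : ℝ) 1) (hindep : nullsIndep μ H0 P)
    (hnull : ∀ j ∈ H0, SuperUniform (P j) μ)
    (hpred : ∀ t ω, alpha t ω = f t (rejHistory P alpha t ω)) (hmono : ∀ t, Monotone (f t))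
    (t : ℕ) : ∫ ω, FDP H0 P alpha t ω ∂μ ≤ ∫ ω, FDPstar H0 P alpha t ω ∂μ := by
  classical
  have hR := measurable_numRejections hPmeas hameas t
  have hrej_int : ∀ k, Integrable (fun ω =>
      (if P k ω ≤ alpha k ω then 1 else 0) / max (numRejections P alpha t ω) 1) μ := fun k =>
    integrable_div_max_one (Measurable.ite (measurableSet_le (hPmeas k) (hameas k))
      measurable_const measurable_const) hR fun ω => by split_ifs <;> simp
  have hlevel_int : ∀ k, Integrable (fun ω => alpha k ω / max (numRejections P alpha t ω) 1) μ :=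
    fun k => integrable_div_max_one (hameas k) hR (ha k)
  calc ∫ ω, FDP H0 P alpha t ω ∂μ
      = ∑ k ∈ (Finset.Iic t).filter (· ∈ H0),
          ∫ ω, (if P k ω ≤ alpha k ω then 1 else 0) / max (numRejections P alpha t ω) 1 ∂μ := by
        simp_rw [FDP_eq_sum]
        exact integral_finsetSum _ fun k _ => hrej_int k
    _ ≤ ∑ k ∈ (Finset.Iic t).filter (· ∈ H0),
          ∫ ω, alpha k ω / max (numRejections P alpha t ω) 1 ∂μ :=
        Finset.sum_le_sum fun k hk =>
          have hkH := (Finset.mem_filter.1 hk).2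
          integral_rej_div_le_integral_level_div hPmeas hameas hpred hmono (ha k) (hnull k hkH)
            (hindep.indep_comap_sigmaOthers hPmeas hkH) t
    _ = ∫ ω, FDPstar H0 P alpha t ω ∂μ := by
        simp_rw [FDPstar_eq_sum]
        exact (integral_finsetSum _ fun k _ => hlevel_int k).symm

end FDR

theorem proposition1d_general {Ω : Type*} [m0 : MeasurableSpace Ω]
    (μ : Measure Ω) [IsProbabilityMeasure μ]
    (P alpha : ℕ → Ω → ℝ) (H0 : Set ℕ)
    (hPmeas : ∀ j, Measurable (P j))
    (hameas : ∀ j, Measurable (alpha j)) (ha01 : ∀ j ω, alpha j ω ∈ Set.Ioo (0 : ℝ) 1)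
    -- independence of the nulls from each other and from the non-nulls
    (hindep : nullsIndep μ H0 P)
    -- marginal super-uniformity of each null p-value
    (hnull : ∀ j ∈ H0, ∀ u ∈ Set.Icc (0 : ℝ) 1, μ {ω | P j ω ≤ u} ≤ ENNReal.ofReal u)
    -- predictability and monotonicity of the level sequence
    (f : ℕ → (ℕ → Bool) → ℝ)
    (hpred : ∀ t ω, alpha t ω = f t (rejHistory P alpha t ω))
    (hmono : ∀ t, Monotone (f t))
    -- target level and almost-sure control of the oracle FDP estimate
    (q : ℝ)
    (hFDPstar : ∀ t : ℕ, ∀ᵐ ω ∂μ, FDPstar H0 P alpha t ω ≤ q)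
    (t : ℕ) :
    ∫ ω, FDP H0 P alpha t ω ∂μ ≤ q := by
  have ha : ∀ j ω, alpha j ω ∈ Set.Icc (0 : ℝ) 1 := fun j ω => Set.Ioo_subset_Icc_self (ha01 j ω)
  calc ∫ ω, FDP H0 P alpha t ω ∂μ ≤ ∫ ω, FDPstar H0 P alpha t ω ∂μ :=
        integral_FDP_le_integral_FDPstar hPmeas hameas ha hindep hnull hpred hmono t
    _ ≤ ∫ _, q ∂μ :=
        integral_mono_ae (integrable_FDPstar hPmeas hameas ha t) (integrable_const q) (hFDPstar t)
    _ = q := by simp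

/-- Proposition 1(d): if the null p-values are independent of each other and of the
non-nulls, each null p-value is super-uniform, the level sequence is monotone, and
`FDP*(t) ≤ α` almost surely for all `t`, then `FDR(t) ≤ α` for all `t`. -/
theorem proposition1d {Ω : Type*} [m0 : MeasurableSpace Ω]
    (μ : Measure Ω) [IsProbabilityMeasure μ]
    (P alpha : ℕ → Ω → ℝ) (H0 : Set ℕ)
    (hPmeas : ∀ j, Measurable (P j)) (hP01 : ∀ j ω, P j ω ∈ Set.Icc (0 : ℝ) 1)
    (hameas : ∀ j, Measurable (alpha j)) (ha01 : ∀ j ω, alpha j ω ∈ Set.Ioo (0 : ℝ) 1)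
    -- independence of the nulls from each other and from the non-nulls
    (hindep : nullsIndep μ H0 P)
    -- marginal super-uniformity of each null p-value
    (hnull : ∀ j ∈ H0, ∀ u ∈ Set.Icc (0 : ℝ) 1, μ {ω | P j ω ≤ u} ≤ ENNReal.ofReal u)
    -- predictability and monotonicity of the level sequence
    (f : ℕ → (ℕ → Bool) → ℝ)
    (hpred : ∀ t ω, alpha t ω = f t (rejHistory P alpha t ω))
    (hmono : ∀ t, Monotone (f t))
    -- target level and almost-sure control of the oracle FDP estimate
    (q : ℝ) (hq : q ∈ Set.Ioo (0 : ℝ) 1)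
    (hFDPstar : ∀ t : ℕ, ∀ᵐ ω ∂μ, FDPstar H0 P alpha t ω ≤ q)
    (t : ℕ) :
    ∫ ω, FDP H0 P alpha t ω ∂μ ≤ q :=
  proposition1d_general (m0 := m0) μ P alpha H0 hPmeas hameas ha01 hindep hnull f hpred hmono q
    hFDPstar t
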